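/- arXiv:math/0604171 — 2 statements merged into one kernel-verified Lean document; each statement's English description precedes it below -/
import Mathlib

section
/- Let m be a positive integer and c, e ∈ ℝ^m. Let S = {d ∈ ℝ : for every index i, c i * d + e i ≥ 0}. Suppose S is nonempty and there exists an index i with c i < 0. Then S is bounded above, its supremum equals the minimum of -e i / c i taken over all indices i with c i < 0, and this supremum belongs to S (so it is the maximal feasible value of the parameter d). -/
lemma le_neg_div_iff_nonneg_mul_add {a b x : ℝ} (ha : a < 0) : x ≤ -b / a ↔ 0 ≤ a * x + b := by
  rw [le_div_iff_of_neg ha]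
  constructor <;> intro h <;> linarith

/-- Constraints with `c i ≥ 0` only get looser as `d` grows, so only the negative coefficients
bound `d`, each by `-e i / c i`. -/
theorem isGreatest_feasible_sInf_ratios {ι : Type*} [Finite ι] (c e : ι → ℝ)
    (hne : {d : ℝ | ∀ i, 0 ≤ c i * d + e i}.Nonempty) (hneg : ∃ i, c i < 0) :
    IsGreatest {d : ℝ | ∀ i, 0 ≤ c i * d + e i}
      (sInf {r : ℝ | ∃ i, c i < 0 ∧ r = -e i / c i}) := by
  set T : Set ℝ := {r : ℝ | ∃ i, c i < 0 ∧ r = -e i / c i}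
  have hTfin : T.Finite :=
    (Set.finite_range fun i => -e i / c i).subset (by rintro r ⟨i, -, rfl⟩; exact ⟨i, rfl⟩)
  obtain ⟨i₀, hi₀⟩ := hneg
  have hTne : T.Nonempty := ⟨_, i₀, hi₀, rfl⟩
  have hle : ∀ i, c i < 0 → sInf T ≤ -e i / c i := fun i hi =>
    csInf_le hTfin.bddBelow ⟨i, hi, rfl⟩
  have hub : ∀ x ∈ {d : ℝ | ∀ i, 0 ≤ c i * d + e i}, x ≤ sInf T := by
    intro x hx
    obtain ⟨j, hj, hdj⟩ := hTne.csInf_mem hTfin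
    rw [hdj, le_neg_div_iff_nonneg_mul_add hj]
    exact hx j
  refine ⟨fun i => ?_, hub⟩
  rcases lt_or_ge (c i) 0 with hi | hi
  · exact (le_neg_div_iff_nonneg_mul_add hi).1 (hle i hi)
  · obtain ⟨x₀, hx₀⟩ := hne
    have hx₀le : c i * x₀ ≤ c i * sInf T := mul_le_mul_of_nonneg_left (hub x₀ hx₀) hi
    linarith [hx₀ i]

theorem stmt_2_general (m : ℕ) (c e : Fin m → ℝ)
    (S : Set ℝ) (hS : S = {d : ℝ | ∀ i, 0 ≤ c i * d + e i})
    (hne : S.Nonempty) (hneg : ∃ i, c i < 0) :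
    BddAbove S ∧
    sSup S = sInf {r : ℝ | ∃ i, c i < 0 ∧ r = -e i / c i} ∧
    sSup S ∈ S := by
  subst hS
  have hmax := isGreatest_feasible_sInf_ratios c e hne hneg
  rw [hmax.csSup_eq]
  exact ⟨hmax.bddAbove, rfl, hmax.1⟩

theorem stmt_2 (m : ℕ) (hm : 0 < m) (c e : Fin m → ℝ)
    (S : Set ℝ) (hS : S = {d : ℝ | ∀ i, 0 ≤ c i * d + e i})
    (hne : S.Nonempty) (hneg : ∃ i, c i < 0) :
    BddAbove S ∧
    sSup S = sInf {r : ℝ | ∃ i, c i < 0 ∧ r = -e i / c i} ∧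
    sSup S ∈ S :=
  stmt_2_general m c e S hS hne hneg
end

section
/- Let m, k be positive integers, N a real m×k matrix, c, e ∈ ℝ^m, and let S = {d ∈ ℝ : there exists y ∈ ℝ^k with y ≥ 0 componentwise and c i * d + e i - (N y) i ≥ 0 for every i}. Suppose there is a column index j such that N i j ≤ 0 for every row i, and N i j < 0 for every row i with c i < 0. If S is nonempty, then S is not bounded above; that is, if some nonbasic variable has a column with all entries nonpositive and strictly negative entries in every row whose coefficient of d is negative, then the maximization linear program is unbounded. -/
theorem stmt_4 (m k : ℕ) (hm : 0 < m) (hk : 0 < k)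
    (N : Matrix (Fin m) (Fin k) ℝ) (c e : Fin m → ℝ)
    (S : Set ℝ)
    (hS : S = {d : ℝ | ∃ y : Fin k → ℝ, (∀ j, 0 ≤ y j) ∧
      ∀ i, 0 ≤ c i * d + e i - N.mulVec y i})
    (hcol : ∃ j, (∀ i, N i j ≤ 0) ∧ (∀ i, c i < 0 → N i j < 0))
    (hne : S.Nonempty) :
    ¬ BddAbove S := by
  obtain ⟨j, hle, hlt⟩ := hcol
  obtain ⟨d₀, hd₀⟩ := hne
  rw [hS] at hd₀
  obtain ⟨y₀, hy₀, hcon⟩ := hd₀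
  -- the ratio bound
  have hmne : (Finset.univ : Finset (Fin m)).Nonempty := by
    simpa [Finset.univ_nonempty_iff] using Fin.pos_iff_nonempty.mp hm
  set f : Fin m → ℝ := fun i => if c i < 0 then c i / N i j else 0 with hf
  set B : ℝ := Finset.univ.sup' hmne f with hB
  have hfnonneg : ∀ i, 0 ≤ f i := by
    intro i
    by_cases h : c i < 0
    · simp only [hf, if_pos h]
      exact le_of_lt (div_pos_of_neg_of_neg h (hlt i h))
    · simp [hf, h]
  have hB0 : 0 ≤ B := le_trans (hfnonneg ⟨0, hm⟩)
    (Finset.le_sup' f (Finset.mem_univ _))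
  have key : ∀ t : ℝ, 0 ≤ t → d₀ + t ∈ S := by
    intro t ht
    rw [hS]
    set s := B * t with hs
    have hs0 : 0 ≤ s := mul_nonneg hB0 ht
    refine ⟨fun l => y₀ l + (if l = j then s else 0), ?_, ?_⟩
    · intro l
      have : (0:ℝ) ≤ if l = j then s else 0 := by positivity
      exact add_nonneg (hy₀ l) this
    · intro i
      have hmv : N.mulVec (fun l => y₀ l + (if l = j then s else 0)) i
          = N.mulVec y₀ i + N i j * s := by
        simp only [Matrix.mulVec, dotProduct, mul_add, Finset.sum_add_distrib]
        congr 1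
        simp [mul_ite]
      rw [hmv]
      have hextra : 0 ≤ c i * t - N i j * s := by
        by_cases h : c i < 0
        · have hNij : N i j < 0 := hlt i h
          have hfi : c i / N i j ≤ B := by
            have h2 := Finset.le_sup' f (Finset.mem_univ i)
            simpa only [hf, if_pos h] using h2
          have hci : B * N i j ≤ c i := (div_le_iff_of_neg hNij).mp hfi
          have : c i * t - N i j * s = t * (c i - N i j * B) := by rw [hs]; ring
          rw [this]
          exact mul_nonneg ht (by nlinarith)
        · push_neg at h
          have h1 : 0 ≤ c i * t := mul_nonneg h ht
          have h2 : N i j * s ≤ 0 := mul_nonpos_of_nonpos_of_nonneg (hle i) hs0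
          linarith
      have := hcon i
      ring_nf
      ring_nf at this hextra
      nlinarith [hextra, this]
  intro hbdd
  obtain ⟨b, hb⟩ := hbdd
  have h1 : d₀ + max 0 (b + 1 - d₀) ∈ S := key _ (le_max_left _ _)
  have h2 : d₀ + max 0 (b + 1 - d₀) ≤ b := hb h1
  have h3 : b + 1 - d₀ ≤ max 0 (b + 1 - d₀) := le_max_right _ _
  linarith
end
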